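/- arXiv:2605.09592 — 3 statements merged into one kernel-verified Lean document; each statement's English description precedes it below -/
import Mathlib

section
/- Let p be a prime and D a positive integer with p > D² + D. Then there exists an integer a with 2 ≤ a ≤ D² + D such that the multiplicative order of a modulo p is strictly greater than D. -/
/-!
If every `a` with `2 ≤ a ≤ N := D² + D` had order at most `D` modulo `p`, then, since `N < p`,
the residues of `1, …, N` would be `N` distinct roots of unity in `ZMod p`, each a root of some
`X ^ d - 1` with `1 ≤ d ≤ D`. These `D` polynomials have at most `D²` roots in total, and
`D² < N`.
-/

open Finset Polynomial

lemma Polynomial.card_nthRootsFinset_le {R : Type*} [CommRing R] [IsDomain R] (n : ℕ) (a : R) :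
    #(nthRootsFinset n a) ≤ n := by
  classical
  rw [nthRootsFinset_def]
  exact (Multiset.toFinset_card_le _).trans (card_nthRoots n a)

lemma card_le_sq_of_forall_orderOf_mem_Icc {R : Type*} [CommRing R] [IsDomain R]
    (s : Finset R) (D : ℕ) (hs : ∀ x ∈ s, orderOf x ∈ Icc 1 D) : #s ≤ D ^ 2 := by
  classical
  have hsub : s ⊆ (Icc 1 D).biUnion fun d ↦ nthRootsFinset d (1 : R) := by
    intro x hx
    have hmem := hs x hx
    refine mem_biUnion.2 ⟨orderOf x, hmem, ?_⟩
    rw [mem_nthRootsFinset (mem_Icc.1 hmem).1]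
    exact pow_orderOf_eq_one x
  calc #s ≤ ∑ d ∈ Icc 1 D, #(nthRootsFinset d (1 : R)) := (card_le_card hsub).trans card_biUnion_le
    _ ≤ ∑ _d ∈ Icc 1 D, D :=
        sum_le_sum fun d hd ↦ (card_nthRootsFinset_le d 1).trans (mem_Icc.1 hd).2
    _ = D ^ 2 := by simp [sq]

lemma ZMod.orderOf_pos {p : ℕ} [Fact p.Prime] {x : ZMod p} (hx : x ≠ 0) : 0 < orderOf x :=
  Nat.pos_of_dvd_of_pos (orderOf_dvd_card_sub_one hx) (Fact.out : p.Prime).pred_pos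

lemma ZMod.natCast_ne_zero_of_pos_of_lt {p a : ℕ} (ha : 0 < a) (hap : a < p) :
    (a : ZMod p) ≠ 0 := by
  rw [Ne, ZMod.natCast_eq_zero_iff]
  exact Nat.not_dvd_of_pos_of_lt ha hap

/-- Let `p` be a prime and `D` a positive integer with `p > D² + D`. Then there exists an
integer `a` with `2 ≤ a ≤ D² + D` whose multiplicative order modulo `p` exceeds `D`. -/
theorem exists_small_elt_of_large_order_mod_prime
    (p D : ℕ) (hp : p.Prime) (hD : 1 ≤ D) (hpD : D ^ 2 + D < p) :
    ∃ a : ℕ, 2 ≤ a ∧ a ≤ D ^ 2 + D ∧ D < orderOf (a : ZMod p) := by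
  have := Fact.mk hp
  by_contra! hsmall
  set N := D ^ 2 + D
  let s : Finset (ZMod p) := (Icc 1 N).image (↑)
  have hcard : #s = N := by
    rw [card_image_of_injOn, Nat.card_Icc, Nat.add_sub_cancel]
    exact (CharP.natCast_injOn_Iio (ZMod p) p).mono fun a ha ↦
      Set.mem_Iio.2 ((mem_Icc.1 ha).2.trans_lt hpD)
  have horder : ∀ x ∈ s, orderOf x ∈ Icc 1 D := by
    simp only [s, mem_image, mem_Icc]
    rintro _ ⟨a, ⟨ha1, haN⟩, rfl⟩
    obtain rfl | ha2 := ha1.eq_or_lt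
    · simpa using hD
    · exact ⟨ZMod.orderOf_pos (ZMod.natCast_ne_zero_of_pos_of_lt (by omega) (by omega)),
        hsmall a ha2 haN⟩
  have := card_le_sq_of_forall_orderOf_mem_Icc s D horder
  omega
end

section
/- Let N ≥ 2 and D ≥ 1 be integers, and suppose that every prime divisor of N is strictly greater than D² + D. Then there exists an integer a with 2 ≤ a ≤ D² + D such that gcd(a, N) = 1 and ord_N(a) > D. -/
/-!
Suppose every `a ≤ D² + D` had order at most `D` modulo `N`, and let `p` be the least prime
factor of `N`. Reducing modulo `p`, each of `1, …, D² + D` becomes a root of `X^d - 1` for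
some `1 ≤ d ≤ D`; since `p > D² + D` these residues are distinct. But over the field `ZMod p`
these `D` polynomials have at most `D · D < D² + D` roots altogether.
-/

open Finset Polynomial

theorem Finset.card_le_mul_self_of_forall_exists_pow_eq_one {R : Type*} [CommRing R] [IsDomain R]
    {s : Finset R} {D : ℕ} (hs : ∀ x ∈ s, ∃ d ∈ Icc 1 D, x ^ d = 1) : #s ≤ D * D := by
  classical
  have hsub : s ⊆ (Icc 1 D).biUnion (fun d ↦ nthRootsFinset d (1 : R)) := by
    intro x hx
    obtain ⟨d, hd, hxd⟩ := hs x hx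
    exact mem_biUnion.2 ⟨d, hd, (mem_nthRootsFinset (mem_Icc.1 hd).1 1).2 hxd⟩
  calc #s ≤ #((Icc 1 D).biUnion (fun d ↦ nthRootsFinset d (1 : R))) := card_le_card hsub
    _ ≤ #(Icc 1 D) * D := card_biUnion_le_card_mul _ _ _ fun d hd ↦
        (Multiset.toFinset_card_le _).trans ((card_nthRoots d 1).trans (mem_Icc.1 hd).2)
    _ = D * D := by rw [Nat.card_Icc, Nat.add_sub_cancel]

theorem ZMod.natCast_injOn_Iio (n : ℕ) : Set.InjOn (Nat.cast : ℕ → ZMod n) (Set.Iio n) :=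
  fun a ha b hb hab ↦ by
    simpa [ZMod.val_natCast_of_lt ha, ZMod.val_natCast_of_lt hb] using congrArg ZMod.val hab

theorem ZMod.orderOf_natCast_pos {N a : ℕ} (hN : N ≠ 0) (ha : a.Coprime N) :
    0 < orderOf (a : ZMod N) :=
  have : NeZero N := ⟨hN⟩
  ((ZMod.isUnit_iff_coprime a N).2 ha).isOfFinOrder.orderOf_pos

theorem ZMod.natCast_pow_orderOf_eq_one_of_dvd {p N : ℕ} (hpN : p ∣ N) (a : ℕ) :
    (a : ZMod p) ^ orderOf (a : ZMod N) = 1 := by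
  have := congrArg (ZMod.castHom hpN (ZMod p)) (pow_orderOf_eq_one (a : ZMod N))
  rwa [map_pow, map_natCast, map_one] at this

/-- Let `N ≥ 2` and `D ≥ 1` be integers, and suppose every prime divisor of `N` is
strictly greater than `D² + D`. Then there exists an integer `a` with `2 ≤ a ≤ D² + D`
such that `gcd(a, N) = 1` and `ord_N(a) > D`. -/
theorem exists_small_elt_of_large_order_mod_N
    (N D : ℕ) (hN : 2 ≤ N) (hD : 1 ≤ D)
    (h : ∀ p : ℕ, p.Prime → p ∣ N → D ^ 2 + D < p) :
    ∃ a : ℕ, 2 ≤ a ∧ a ≤ D ^ 2 + D ∧ Nat.Coprime a N ∧ D < orderOf (a : ZMod N) := by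
  set p := N.minFac
  have hp : p.Prime := Nat.minFac_prime (by omega)
  have : Fact p.Prime := ⟨hp⟩
  have hpD : D ^ 2 + D < p := h p hp N.minFac_dvd
  have hcop : ∀ a ∈ Icc 1 (D ^ 2 + D), a.Coprime N := fun a ha ↦
    (Nat.coprime_of_lt_minFac (by grind) (by grind)).symm
  by_contra! hsmall
  have hroots : ∀ x ∈ (Icc 1 (D ^ 2 + D)).image (Nat.cast : ℕ → ZMod p),
      ∃ d ∈ Icc 1 D, x ^ d = 1 := by
    simp only [forall_mem_image]
    intro a ha
    refine ⟨_, mem_Icc.2 ⟨ZMod.orderOf_natCast_pos (by omega) (hcop a ha), ?_⟩,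
      ZMod.natCast_pow_orderOf_eq_one_of_dvd N.minFac_dvd a⟩
    rcases (mem_Icc.1 ha).1.eq_or_lt with rfl | ha2
    · simpa using hD
    · exact hsmall a ha2 (mem_Icc.1 ha).2 (hcop a ha)
  have hcard := card_le_mul_self_of_forall_exists_pow_eq_one hroots
  rw [card_image_of_injOn ((ZMod.natCast_injOn_Iio p).mono fun a ha ↦ by grind),
    Nat.card_Icc, Nat.add_sub_cancel, sq] at hcard
  omega
end

section
/- Let p be a prime and let M and y be positive integers with y < p. Suppose that a^M ≡ 1 (mod p) for every integer a with 1 ≤ a ≤ y. Then the number of y-smooth integers n with 1 ≤ n ≤ p − 1 is at most M. -/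
/-!
Multiplicativity propagates `a ^ M = 1` from the primes `q ≤ y` to every `y`-smooth `n`, so
the `y`-smooth integers in `[1, p - 1]` reduce to distinct roots of `X ^ M - 1` in `ZMod p`,
a field, where this polynomial has at most `M` roots.
-/

open Finset Polynomial

lemma natCast_pow_eq_one_of_forall_prime_dvd {R : Type*} [CommSemiring R] {M n : ℕ} (hn : n ≠ 0)
    (h : ∀ q : ℕ, q.Prime → q ∣ n → (q : R) ^ M = 1) : (n : R) ^ M = 1 := by
  induction n using induction_on_primes with
  | zero => exact absurd rfl hn
  | one => simp
  | prime_mul q a hq ih =>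
    have ha : a ≠ 0 := right_ne_zero_of_mul hn
    rw [Nat.cast_mul, mul_pow, h q hq (dvd_mul_right q a),
      ih ha fun r hr hra => h r hr (hra.mul_left q), one_mul]

theorem card_smooth_le_M_general
    (p M y : ℕ) (hp : p.Prime) (hM : 0 < M)
    (h : ∀ a : ℕ, 1 ≤ a → a ≤ y → a ^ M ≡ 1 [MOD p]) :
    {n : ℕ | 1 ≤ n ∧ n ≤ p - 1 ∧ ∀ q : ℕ, q.Prime → q ∣ n → q ≤ y}.ncard ≤ M := by
  have := Fact.mk hp
  have hprime_root (q : ℕ) (hq : q.Prime) (hqy : q ≤ y) : (q : ZMod p) ^ M = 1 := by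
    exact_mod_cast (ZMod.natCast_eq_natCast_iff _ _ _).2 (h q hq.one_lt.le hqy)
  calc _ ≤ #(nthRootsFinset M (1 : ZMod p)) := by
        rw [← Set.ncard_coe_finset]
        refine Set.ncard_le_ncard_of_injOn (↑) (fun n ⟨hn, _, hsmooth⟩ => ?_) ?_
        · rw [Finset.mem_coe, mem_nthRootsFinset hM]
          exact natCast_pow_eq_one_of_forall_prime_dvd (by omega)
            fun q hq hqn => hprime_root q hq (hsmooth q hq hqn)
        · exact (CharP.natCast_injOn_Iio (ZMod p) p).mono fun n ⟨hn, hnp, _⟩ => by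
            simp only [Set.mem_Iio]; omega
    _ ≤ M := card_nthRootsFinset_le M 1

/-- Let `p` be a prime and `M`, `y` positive integers with `y < p`. Suppose
`a^M ≡ 1 (mod p)` for every integer `1 ≤ a ≤ y`. Then the number of `y`-smooth integers
`n` with `1 ≤ n ≤ p − 1` is at most `M`. -/
theorem card_smooth_le_M
    (p M y : ℕ) (hp : p.Prime) (hM : 0 < M) (hy : 0 < y) (hyp : y < p)
    (h : ∀ a : ℕ, 1 ≤ a → a ≤ y → a ^ M ≡ 1 [MOD p]) :
    {n : ℕ | 1 ≤ n ∧ n ≤ p - 1 ∧ ∀ q : ℕ, q.Prime → q ∣ n → q ≤ y}.ncard ≤ M :=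
  card_smooth_le_M_general p M y hp hM h
end
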